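/- Let d, L ≥ 1, let q ∈ ℝ^d with ‖q‖ ≤ Q_max, let k_1,…,k_L ∈ ℝ^d be keys and k̃_1,…,k̃_L ∈ ℝ^d the keys after freezing, and suppose max_{1≤i≤L} ‖k̃_i − k_i‖ ≤ B e^{−μ(ℓ−ℓ_s)} for constants B > 0, μ > 0 and integers ℓ ≥ ℓ_s. Let A and Ã be the attention weights computed from the keys k_i and k̃_i respectively (with the same query q). Then the freezing-induced mass gap satisfies (1/2) Σ_{i=1}^L |Ã_i − A_i| ≤ (Q_max/√d) · B e^{−μ(ℓ−ℓ_s)}. -/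

import Mathlib

/-!
Perturbing every score by at most `ε` changes each softmax weight by a factor in
`[e^{-2ε}, e^{2ε}]`. Two probability vectors whose ratios stay in `[c⁻¹, c]` satisfy
`(c + 1)|P_i - Q_i| ≤ (c - 1)(P_i + Q_i)` coordinatewise; summing gives a total variation
distance at most `(e^{2ε} - 1)/(e^{2ε} + 1) = tanh ε ≤ ε`. With scores `⟨q, k_i⟩/√d`,
Cauchy–Schwarz gives `ε = Q_max ‖k̃_i - k_i‖/√d`.
-/

open scoped RealInnerProductSpace

/-- Attention weights `A_i(q) = exp(⟨q,k_i⟩/√d) / ∑_j exp(⟨q,k_j⟩/√d)`. -/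
noncomputable def attnWeight {d L : ℕ} (k : Fin L → EuclideanSpace ℝ (Fin d))
    (q : EuclideanSpace ℝ (Fin d)) (i : Fin L) : ℝ :=
  Real.exp (⟪q, k i⟫ / Real.sqrt d) / ∑ j, Real.exp (⟪q, k j⟫ / Real.sqrt d)

open Real Finset

namespace Real

theorem sinh_le_mul_cosh {x : ℝ} (hx : 0 ≤ x) : sinh x ≤ x * cosh x := by
  have hmvt := (convex_Icc (0 : ℝ) x).image_sub_le_mul_sub_of_deriv_le
    continuous_sinh.continuousOn differentiable_sinh.differentiableOn
    (C := cosh x) (fun y hy => by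
      rw [interior_Icc] at hy
      rw [deriv_sinh, cosh_le_cosh, abs_of_pos hy.1, abs_of_nonneg hx]
      exact hy.2.le)
    0 (Set.left_mem_Icc.2 hx) x (Set.right_mem_Icc.2 hx) hx
  simpa [mul_comm] using hmvt

theorem tanh_le_self {x : ℝ} (hx : 0 ≤ x) : tanh x ≤ x := by
  rw [tanh_eq_sinh_div_cosh, div_le_iff₀ (cosh_pos x)]
  exact sinh_le_mul_cosh hx

theorem tanh_eq_exp_two_mul (x : ℝ) : tanh x = (exp (2 * x) - 1) / (exp (2 * x) + 1) := by
  rw [tanh_eq, two_mul, exp_add, exp_neg]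
  field_simp

end Real

theorem abs_sub_mul_add_one_le {a b c : ℝ} (hab : a ≤ c * b) (hba : b ≤ c * a) :
    |a - b| * (c + 1) ≤ (c - 1) * (a + b) := by
  rcases abs_cases (a - b) with ⟨h, -⟩ | ⟨h, -⟩ <;> rw [h] <;> linarith

section Softmax

variable {ι : Type*} [Fintype ι]

noncomputable def softmax (s : ι → ℝ) (i : ι) : ℝ :=
  exp (s i) / ∑ j, exp (s j)

theorem sum_exp_pos [Nonempty ι] (s : ι → ℝ) : 0 < ∑ j, exp (s j) :=
  sum_pos (fun j _ => exp_pos (s j)) univ_nonempty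

theorem sum_softmax [Nonempty ι] (s : ι → ℝ) : ∑ i, softmax s i = 1 := by
  simp only [softmax, ← sum_div, div_self (sum_exp_pos s).ne']

theorem softmax_le_exp_mul_softmax [Nonempty ι] {s t : ι → ℝ} {ε : ℝ}
    (h : ∀ j, |s j - t j| ≤ ε) (i : ι) : softmax s i ≤ exp (2 * ε) * softmax t i := by
  have hZ : exp (-ε) * ∑ j, exp (t j) ≤ ∑ j, exp (s j) := by
    rw [mul_sum]
    gcongr with j
    rw [← exp_add]
    gcongr
    linarith [(abs_le.1 (h j)).1]
  calc softmax s i = exp (s i) / ∑ j, exp (s j) := rfl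
    _ ≤ exp (ε + t i) / (exp (-ε) * ∑ j, exp (t j)) := by
      have := sum_exp_pos t
      gcongr
      linarith [(abs_le.1 (h i)).2]
    _ = exp (2 * ε) * softmax t i := by
      rw [softmax, exp_add, two_mul, exp_add, exp_neg]
      field_simp

theorem half_sum_abs_softmax_sub_le_tanh [Nonempty ι] {s t : ι → ℝ} {ε : ℝ}
    (h : ∀ j, |s j - t j| ≤ ε) : (1 / 2) * ∑ i, |softmax s i - softmax t i| ≤ tanh ε := by
  set c := exp (2 * ε)
  have hc : 0 < c + 1 := by positivity
  have hpointwise (i : ι) : |softmax s i - softmax t i| * (c + 1) ≤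
      (c - 1) * (softmax s i + softmax t i) :=
    abs_sub_mul_add_one_le (softmax_le_exp_mul_softmax h i)
      (softmax_le_exp_mul_softmax (fun j => abs_sub_comm (s j) (t j) ▸ h j) i)
  have hsum := sum_le_sum fun i (_ : i ∈ univ) => hpointwise i
  rw [← sum_mul, ← mul_sum, sum_add_distrib, sum_softmax, sum_softmax] at hsum
  rw [tanh_eq_exp_two_mul, le_div_iff₀ hc]
  linarith

theorem half_sum_abs_softmax_sub_le [Nonempty ι] {s t : ι → ℝ} {ε : ℝ}
    (h : ∀ j, |s j - t j| ≤ ε) : (1 / 2) * ∑ i, |softmax s i - softmax t i| ≤ ε :=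
  have hε : 0 ≤ ε := (abs_nonneg _).trans (h (Classical.arbitrary ι))
  (half_sum_abs_softmax_sub_le_tanh h).trans (tanh_le_self hε)

end Softmax

theorem freezing_mass_gap_general (d L : ℕ) (hL : 1 ≤ L)
    (q : EuclideanSpace ℝ (Fin d)) (Qmax : ℝ) (hq : ‖q‖ ≤ Qmax)
    (k ktil : Fin L → EuclideanSpace ℝ (Fin d))
    (B μ : ℝ)
    (ℓ ℓs : ℤ)
    (hkey : ∀ i, ‖ktil i - k i‖ ≤ B * Real.exp (-μ * ((ℓ : ℝ) - (ℓs : ℝ)))) :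
    (1 / 2) * ∑ i, |attnWeight ktil q i - attnWeight k q i| ≤
      (Qmax / Real.sqrt d) * B * Real.exp (-μ * ((ℓ : ℝ) - (ℓs : ℝ))) := by
  have : Nonempty (Fin L) := Fin.pos_iff_nonempty.mp hL
  have hQ : 0 ≤ Qmax := (norm_nonneg q).trans hq
  have hscore (i : Fin L) : |⟪q, ktil i⟫ / √d - ⟪q, k i⟫ / √d| ≤
      Qmax / √d * B * exp (-μ * ((ℓ : ℝ) - (ℓs : ℝ))) := by
    rw [← sub_div, ← inner_sub_right, abs_div, abs_of_nonneg (sqrt_nonneg _), mul_assoc,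
      div_mul_eq_mul_div]
    gcongr
    exact (abs_real_inner_le_norm _ _).trans (mul_le_mul hq (hkey i) (norm_nonneg _) hQ)
  exact half_sum_abs_softmax_sub_le hscore

/-- if the frozen keys satisfy
`max_i ‖k̃_i − k_i‖ ≤ B e^{−μ(ℓ−ℓ_s)}` and `‖q‖ ≤ Q_max`, then the total variation
distance between the corresponding attention weight vectors is at most
`(Q_max/√d) · B e^{−μ(ℓ−ℓ_s)}`. -/
theorem freezing_mass_gap (d L : ℕ) (hd : 1 ≤ d) (hL : 1 ≤ L)
    (q : EuclideanSpace ℝ (Fin d)) (Qmax : ℝ) (hq : ‖q‖ ≤ Qmax)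
    (k ktil : Fin L → EuclideanSpace ℝ (Fin d))
    (B μ : ℝ) (hB : 0 < B) (hμ : 0 < μ)
    (ℓ ℓs : ℤ) (hℓ : ℓs ≤ ℓ)
    (hkey : ∀ i, ‖ktil i - k i‖ ≤ B * Real.exp (-μ * ((ℓ : ℝ) - (ℓs : ℝ)))) :
    (1 / 2) * ∑ i, |attnWeight ktil q i - attnWeight k q i| ≤
      (Qmax / Real.sqrt d) * B * Real.exp (-μ * ((ℓ : ℝ) - (ℓs : ℝ))) :=
  freezing_mass_gap_general d L hL q Qmax hq k ktil B μ ℓ ℓs hkey
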